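/- Let r ≥ 2 and n ≥ 1 be integers with (r-1)n ≥ 3, let p ∈ {0, 1, ..., r-1}, and set t = r(r-1)n - 2r - (1-p)(r-1), D = (r-1)(rn+p-1), and μ = D(D-1)···(D-t+1) (the falling factorial of D of length t). Then the t-th derivative of the R-Bonacci polynomial R_{rn+p} satisfies the polynomial identity R_{rn+p}^{(t)}(X) = μ·X^{2r} + (D-r)(D-r-1)···(D-r-t+1)·C_r(rn+p-2, 1)·X^r + t!·C_r(rn+p-3, 2). -/

import Mathlib

noncomputable def RBon (r : ℕ) : ℕ → Polynomial ℂ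
  | 0 => 0
  | 1 => 1
  | n + 2 => ∑ i ∈ (Finset.range r).attach,
      Polynomial.X ^ (i : ℕ) * RBon r (n + 2 - (r - (i : ℕ)))
  decreasing_by
    have h := i.2
    rw [Finset.mem_range] at h
    omega

noncomputable def rnomial (r n j : ℕ) : ℕ :=
  ((∑ i ∈ Finset.range r, (Polynomial.X : Polynomial ℕ) ^ i) ^ n).coeff j

/-!
Multiplying the recursion by `X ^ N` shows that `S_N = X ^ N * R_{N+1}` satisfies
`S_{N+1} = X ^ r * (S_N + ⋯ + S_{N-r+1})`. So does `∑_k C_r(k, N - k) X ^ (r k)`, because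
`C_r(k + 1, ·)` is the sum of `r` consecutive values of `C_r(k, ·)`. Hence
`R_{N+1} = ∑_k C_r(k, N - k) X ^ (r k - N)`, with top exponent `(r - 1) N = D`. The exponents
drop in steps of `r`, so differentiating `t = D - 2r` times leaves exactly the three top terms.
-/

open Polynomial Finset

lemma rnomial_zero_succ (r j : ℕ) : rnomial r 0 (j + 1) = 0 := by
  simp [rnomial, coeff_one]

lemma rnomial_zero_right {r : ℕ} (hr : 1 ≤ r) (k : ℕ) : rnomial r k 0 = 1 := by
  simp [rnomial, coeff_zero_eq_eval_zero, eval_finsetSum, zero_pow_eq, mem_range.2 hr]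

lemma rnomial_succ (r k m : ℕ) :
    rnomial r (k + 1) m = ∑ i ∈ range r, if i ≤ m then rnomial r k (m - i) else 0 := by
  rw [rnomial, pow_succ, mul_sum, finsetSum_coeff]
  exact sum_congr rfl fun i _ => coeff_mul_X_pow' _ i m

lemma rnomial_eq_zero_of_lt {r k j : ℕ} (h : (r - 1) * k < j) : rnomial r k j = 0 := by
  refine coeff_eq_zero_of_natDegree_lt (lt_of_le_of_lt ?_ h)
  rw [mul_comm]
  refine natDegree_pow_le_of_le k (natDegree_sum_le_of_forall_le _ _ fun i hi => ?_)
  rw [natDegree_X_pow]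
  exact Nat.le_sub_one_of_lt (mem_range.1 hi)

lemma iterate_derivative_C_mul_X_pow {R : Type*} [CommSemiring R] (a : R) (e t : ℕ) :
    derivative^[t] (C a * X ^ e) = C (a * e.descFactorial t) * X ^ (e - t) := by
  rw [iterate_derivative_C_mul, iterate_derivative_X_pow_eq_C_mul, map_mul, mul_assoc]

/-- Shifted by one to match the indexing of `RBon`: `rnomialDiag r y (N + 1)` is
`∑ k ≤ N, C_r(k, N - k) y ^ k`, and `rnomialDiag r y 0 = 0` matches `RBon r 0 = 0`. -/
noncomputable def rnomialDiag {R : Type*} [CommSemiring R] (r : ℕ) (y : R) (m : ℕ) : R :=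
  ∑ k ∈ range m, (rnomial r k (m - 1 - k) : R) * y ^ k

lemma rnomialDiag_add_two {R : Type*} [CommSemiring R] (r : ℕ) (y : R) (n : ℕ) :
    rnomialDiag r y (n + 2) = y * ∑ i ∈ range r, rnomialDiag r y (n + 1 - i) := by
  have hidx : ∀ k, n + 2 - 1 - (k + 1) = n - k := fun k => by omega
  rw [rnomialDiag, sum_range_succ', show n + 2 - 1 - 0 = n + 1 by omega, rnomial_zero_succ,
    Nat.cast_zero, zero_mul, add_zero, mul_sum]
  simp_rw [hidx, rnomial_succ, Nat.cast_sum, sum_mul]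
  rw [sum_comm]
  refine sum_congr rfl fun i _ => ?_
  rw [rnomialDiag, mul_sum, ← sum_range_add_sum_Ico _ (by omega : n + 1 - i ≤ n + 1),
    sum_eq_zero (s := Ico _ _), add_zero]
  · refine sum_congr rfl fun k hk => ?_
    rw [mem_range] at hk
    rw [if_pos (by omega), show n - k - i = n + 1 - i - 1 - k by omega]
    ring
  · intro k hk
    rw [mem_Ico] at hk
    rw [if_neg (by omega), Nat.cast_zero, zero_mul]

lemma RBon_add_two (r n : ℕ) :
    RBon r (n + 2) = ∑ i ∈ range r, X ^ (r - 1 - i) * RBon r (n + 1 - i) := by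
  rw [RBon, sum_attach (range r) fun i => X ^ i * RBon r (n + 2 - (r - i)),
    ← sum_range_reflect]
  refine sum_congr rfl fun i hi => ?_
  rw [mem_range] at hi
  rw [show n + 2 - (r - (r - 1 - i)) = n + 1 - i by omega]

lemma X_pow_mul_RBon (r m : ℕ) : X ^ (m - 1) * RBon r m = rnomialDiag r (X ^ r) m := by
  induction m using Nat.strong_induction_on with
  | _ m ih =>
    match m with
    | 0 => simp [RBon, rnomialDiag]
    | 1 => simp [RBon, rnomialDiag, rnomial]
    | n + 2 =>
      rw [RBon_add_two, rnomialDiag_add_two, mul_sum, mul_sum]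
      refine sum_congr rfl fun i hi => ?_
      rw [mem_range] at hi
      rcases le_or_gt i n with hin | hin
      · rw [← ih _ (by omega), ← mul_assoc, ← mul_assoc, ← pow_add, ← pow_add]
        congr 2
        omega
      · rw [show n + 1 - i = 0 by omega, RBon, rnomialDiag, sum_range_zero, mul_zero, mul_zero,
          mul_zero]

lemma RBon_succ_eq_sum {r : ℕ} (hr : 1 ≤ r) (N : ℕ) :
    RBon r (N + 1) = ∑ k ∈ range (N + 1), C (rnomial r k (N - k) : ℂ) * X ^ (r * k - N) := by
  refine mul_left_cancel₀ (pow_ne_zero N X_ne_zero) ?_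
  have hscaled := X_pow_mul_RBon r (N + 1)
  rw [Nat.add_sub_cancel] at hscaled
  rw [hscaled, rnomialDiag, mul_sum]
  refine sum_congr rfl fun k hk => ?_
  rw [Nat.add_sub_cancel, ← C_eq_natCast, ← pow_mul]
  rcases le_or_gt N (r * k) with hN | hN
  · rw [mul_left_comm, ← pow_add, Nat.add_sub_cancel' hN]
  · have h := Nat.sub_one_mul r k
    have hk : k ≤ r * k := Nat.le_mul_of_pos_left k hr
    rw [rnomial_eq_zero_of_lt (by omega), Nat.cast_zero, C_0, zero_mul, zero_mul, mul_zero]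

theorem iterate_derivative_RBon {r N t : ℕ} (hr : 2 ≤ r) (ht : t + 2 * r = (r - 1) * N) :
    derivative^[t] (RBon r (N + 1))
      = C ((t + 2 * r).descFactorial t : ℂ) * X ^ (2 * r)
        + C ((t + r).descFactorial t * (rnomial r (N - 1) 1 : ℂ)) * X ^ r
        + C ((t.factorial : ℂ) * rnomial r (N - 2) 2) := by
  obtain ⟨M, rfl⟩ : ∃ M, N = M + 2 := by
    refine ⟨N - 2, (Nat.sub_add_cancel ?_).symm⟩
    by_contra! h
    have : (r - 1) * N ≤ (r - 1) * 1 := Nat.mul_le_mul_left _ (by omega)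
    omega
  have hrM : r * M = t + M + 2 := by
    have h1 := Nat.sub_one_mul r (M + 2)
    have h2 : r * (M + 2) = r * M + 2 * r := by ring
    omega
  have hlow : ∀ k ∈ range M,
      derivative^[t] (C (rnomial r k (M + 2 - k) : ℂ) * X ^ (r * k - (M + 2))) = 0 := by
    intro k hk
    -- the exponent is truncated: when `r * k < M + 2` it is the coefficient that vanishes
    have hrk : r * k < r * M := Nat.mul_lt_mul_of_pos_left (mem_range.1 hk) (by omega)
    rw [iterate_derivative_C_mul_X_pow]
    rcases lt_or_ge (r * k) (M + 2) with hk2 | hk2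
    · have h := Nat.sub_one_mul r k
      have hk : k ≤ r * k := Nat.le_mul_of_pos_left k (by omega)
      rw [rnomial_eq_zero_of_lt (by omega)]
      simp
    · rw [Nat.descFactorial_eq_zero_iff_lt.2 (by omega)]
      simp
  rw [RBon_succ_eq_sum (by omega), iterate_derivative_sum, sum_range_succ, sum_range_succ,
    sum_range_succ, sum_eq_zero hlow, zero_add]
  have e0 : r * M - (M + 2) = t := by omega
  have e1 : r * (M + 1) - (M + 2) = t + r := by rw [mul_add_one]; omega
  have e2 : r * (M + 2) - (M + 2) = t + 2 * r := by rw [mul_add]; omega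
  simp only [iterate_derivative_C_mul_X_pow, e0, e1, e2, Nat.add_sub_cancel_left, Nat.sub_self,
    Nat.add_sub_add_left, Nat.add_sub_cancel, rnomial_zero_right (by omega : 1 ≤ r),
    Nat.descFactorial_self, pow_zero, mul_one, Nat.cast_one, one_mul,
    show M + 2 - 1 = M + 1 from rfl, show 2 - 1 = 1 from rfl, map_mul]
  ring

theorem stmt_10_general (r n : ℕ) (hr : 2 ≤ r)
    (p : ℕ)
    (t : ℕ)
    (ht : (t : ℤ) = (r : ℤ) * ((r : ℤ) - 1) * n - 2 * r - (1 - (p : ℤ)) * ((r : ℤ) - 1))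
    (D : ℕ) (hD : D = (r - 1) * (r * n + p - 1))
    (μ : ℕ) (hμ : μ = D.descFactorial t) :
    Polynomial.derivative^[t] (RBon r (r * n + p))
      = Polynomial.C (μ : ℂ) * Polynomial.X ^ (2 * r)
        + Polynomial.C (((D - r).descFactorial t : ℂ) * (rnomial r (r * n + p - 2) 1 : ℂ))
            * Polynomial.X ^ r
        + Polynomial.C ((t.factorial : ℂ) * (rnomial r (r * n + p - 3) 2 : ℂ)) := by
  obtain ⟨N, hN⟩ : ∃ N, r * n + p = N + 1 := by
    refine Nat.exists_eq_add_one.2 (Nat.pos_of_ne_zero fun h0 => ?_)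
    obtain ⟨hrn, rfl⟩ : r * n = 0 ∧ p = 0 := by omega
    have hrnZ : (r : ℤ) * n = 0 := by exact_mod_cast hrn
    have : (t : ℤ) = 1 - 3 * r := by rw [ht]; linear_combination ((r : ℤ) - 1) * hrnZ
    omega
  rw [hN, Nat.add_sub_cancel] at hD
  have htD : t + 2 * r = (r - 1) * N := by
    zify [(by omega : 1 ≤ r)] at hN ⊢
    rw [ht]
    linear_combination ((r : ℤ) - 1) * hN
  subst hμ hD
  rw [hN, iterate_derivative_RBon hr htD, ← htD, show t + 2 * r - r = t + r by omega]
  rfl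

theorem stmt_10 (r n : ℕ) (hr : 2 ≤ r) (hn : 1 ≤ n) (h3 : 3 ≤ (r - 1) * n)
    (p : ℕ) (hp : p ≤ r - 1)
    (t : ℕ)
    (ht : (t : ℤ) = (r : ℤ) * ((r : ℤ) - 1) * n - 2 * r - (1 - (p : ℤ)) * ((r : ℤ) - 1))
    (D : ℕ) (hD : D = (r - 1) * (r * n + p - 1))
    (μ : ℕ) (hμ : μ = D.descFactorial t) :
    Polynomial.derivative^[t] (RBon r (r * n + p))
      = Polynomial.C (μ : ℂ) * Polynomial.X ^ (2 * r)
        + Polynomial.C (((D - r).descFactorial t : ℂ) * (rnomial r (r * n + p - 2) 1 : ℂ))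
            * Polynomial.X ^ r
        + Polynomial.C ((t.factorial : ℂ) * (rnomial r (r * n + p - 3) 2 : ℂ)) :=
  stmt_10_general r n hr p t ht D hD μ hμ
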